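/- arXiv:1505.03342 — 5 statements merged into one kernel-verified Lean document; each statement's English description precedes it below -/
import Mathlib

section
/- Let P be a choice process with P^l > 0 and P^r > 0. If the function Q^l(t) = P({l} × [0, t]) / F(t) is nondecreasing on the set {t : F(t) > 0}, then F^l(t) ≤ F^r(t) for every t ∈ T, i.e., the conditional decision-time distribution given choice l first-order stochastically dominates the one given choice r; symmetrically, if Q^l is nonincreasing then F^l(t) ≥ F^r(t) for all t, and if Q^l is constant then F^l = F^r. -/
open MeasureTheory Filter Topology
open scoped NNReal ENNReal

/-!
Write `G`, `H` for the unnormalised cdfs `t ↦ P({l} × [0, t])`, `t ↦ P({r} × [0, t])`, so that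
`F = G + H` and `Q^l = G / (G + H)`. For `s ≤ t`, `Q^l(s) ≤ Q^l(t)` is equivalent to
`G(s) H(t) ≤ G(t) H(s)`; letting `t → ∞` gives `G(s) P^r ≤ P^l H(s)`, i.e. `F^l(s) ≤ F^r(s)`.
The antitone case is the monotone one for `Q^r = 1 - Q^l`, with `l` and `r` exchanged.
-/

section

variable {α : Type*} [Preorder α] {G H : α → ℝ}

lemma mul_le_mul_of_monotoneOn_div_add (hG : 0 ≤ G) (hH : 0 ≤ H)
    (hmono : MonotoneOn (fun t ↦ G t / (G t + H t)) {t | 0 < G t + H t})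
    {s t : α} (hst : s ≤ t) : G s * H t ≤ G t * H s := by
  have hzero : ∀ u, ¬0 < G u + H u → G u = 0 ∧ H u = 0 := fun u hu ↦
    (add_eq_zero_iff_of_nonneg (hG u) (hH u)).1
      (le_antisymm (not_lt.1 hu) (add_nonneg (hG u) (hH u)))
  by_cases hs : 0 < G s + H s
  · by_cases ht : 0 < G t + H t
    · have hle := hmono hs ht hst
      rw [div_le_div_iff₀ hs ht] at hle
      linarith
    · simp [hzero t ht]
  · simp [hzero s hs]

lemma mul_le_mul_of_monotoneOn_div_add_of_tendsto [IsDirected α (· ≤ ·)] [Nonempty α] {a b : ℝ}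
    (hG : 0 ≤ G) (hH : 0 ≤ H) (hGa : Tendsto G atTop (𝓝 a)) (hHb : Tendsto H atTop (𝓝 b))
    (hmono : MonotoneOn (fun t ↦ G t / (G t + H t)) {t | 0 < G t + H t}) (s : α) :
    G s * b ≤ a * H s :=
  le_of_tendsto_of_tendsto (tendsto_const_nhds.mul hHb) (hGa.mul tendsto_const_nhds) <|
    (eventually_ge_atTop s).mono fun _ hst ↦ mul_le_mul_of_monotoneOn_div_add hG hH hmono hst

lemma monotoneOn_div_add_swap_of_antitoneOn
    (hanti : AntitoneOn (fun t ↦ G t / (G t + H t)) {t | 0 < G t + H t}) :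
    MonotoneOn (fun t ↦ H t / (H t + G t)) {t | 0 < H t + G t} := by
  have hcompl : ∀ t, 0 < G t + H t → H t / (H t + G t) = 1 - G t / (G t + H t) := by
    intro t ht
    rw [add_comm (H t)]
    field_simp
    ring
  intro s hs t ht hst
  have hs' : 0 < G s + H s := (add_comm (H s) (G s)) ▸ hs
  have ht' : 0 < G t + H t := (add_comm (H t) (G t)) ▸ ht
  have hle := hanti hs' ht' hst
  simp only at hle ⊢
  rw [hcompl s hs', hcompl t ht']
  linarith

end

section

variable {β : Type*} [MeasurableSpace β]

lemma measureReal_univ_prod_bool (μ : Measure (Bool × β)) [IsFiniteMeasure μ] {S : Set β}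
    (hS : MeasurableSet S) :
    μ.real (Set.univ ×ˢ S) = μ.real ({true} ×ˢ S) + μ.real ({false} ×ˢ S) := by
  rw [Bool.univ_eq, Set.insert_eq, Set.union_prod, Set.union_comm,
    measureReal_union _ ((measurableSet_singleton false).prod hS)]
  exact Set.disjoint_prod.2 (Or.inl (by simp))

lemma tendsto_measureReal_prod_Iic_atTop {γ : Type*} [MeasurableSpace γ] [Preorder γ]
    [IsCountablyGenerated (atTop : Filter γ)] (μ : Measure (β × γ)) [IsFiniteMeasure μ]
    (s : Set β) :
    Tendsto (fun t ↦ μ.real (s ×ˢ Set.Iic t)) atTop (𝓝 (μ.real (s ×ˢ Set.univ))) := by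
  have hmono : Monotone fun t : γ ↦ s ×ˢ Set.Iic t :=
    fun _ _ hst ↦ Set.prod_mono le_rfl (Set.Iic_subset_Iic.2 hst)
  have := tendsto_measure_iUnion_atTop (μ := μ) hmono
  rw [← Set.prod_iUnion, Set.iUnion_Iic] at this
  exact (ENNReal.tendsto_toReal (measure_ne_top μ _)).comp this

end

/-- For a choice process `P` on `A × T` (`A = Bool`, `true = l`,
`false = r`, `T = ℝ≥0`) with `P^l > 0` and `P^r > 0`: if
`Q^l(t) = P({l} × [0,t]) / F(t)` is nondecreasing on `{t | F(t) > 0}`, then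
`F^l(t) ≤ F^r(t)` for all `t` (the conditional decision-time distribution given
`l` first-order stochastically dominates the one given `r`); if `Q^l` is
nonincreasing there then `F^l(t) ≥ F^r(t)` for all `t`; and if `Q^l` is constant
there then `F^l = F^r`. -/
theorem stmt_2
    (P : Measure (Bool × ℝ≥0)) [IsProbabilityMeasure P]
    (Pl Pr : ℝ)
    (hPl : Pl = (P ({true} ×ˢ (Set.univ : Set ℝ≥0))).toReal)
    (hPr : Pr = (P ({false} ×ˢ (Set.univ : Set ℝ≥0))).toReal)
    (hPlpos : 0 < Pl) (hPrpos : 0 < Pr)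
    (Fc Fl Fr Q : ℝ≥0 → ℝ)
    (hFc : ∀ t, Fc t = (P (Set.univ ×ˢ Set.Iic t)).toReal)
    (hFl : ∀ t, Fl t = (P ({true} ×ˢ Set.Iic t)).toReal / Pl)
    (hFr : ∀ t, Fr t = (P ({false} ×ˢ Set.Iic t)).toReal / Pr)
    (hQ : ∀ t, Q t = (P ({true} ×ˢ Set.Iic t)).toReal / Fc t) :
    (MonotoneOn Q {t | 0 < Fc t} → ∀ t, Fl t ≤ Fr t) ∧
    (AntitoneOn Q {t | 0 < Fc t} → ∀ t, Fr t ≤ Fl t) ∧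
    ((∀ s ∈ {t | 0 < Fc t}, ∀ t ∈ {t | 0 < Fc t}, Q s = Q t) → ∀ t, Fl t = Fr t) := by
  set G : ℝ≥0 → ℝ := fun t ↦ (P ({true} ×ˢ Set.Iic t)).toReal
  set H : ℝ≥0 → ℝ := fun t ↦ (P ({false} ×ˢ Set.Iic t)).toReal
  have hFcGH : Fc = fun t ↦ G t + H t :=
    funext fun t ↦ (hFc t).trans (measureReal_univ_prod_bool P measurableSet_Iic)
  subst hFcGH
  have hQGH : Q = fun t ↦ G t / (G t + H t) := funext hQ
  subst hQGH
  have hG : Tendsto G atTop (𝓝 Pl) := hPl ▸ tendsto_measureReal_prod_Iic_atTop P {true}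
  have hH : Tendsto H atTop (𝓝 Pr) := hPr ▸ tendsto_measureReal_prod_Iic_atTop P {false}
  have hG0 : 0 ≤ G := fun _ ↦ measureReal_nonneg
  have hH0 : 0 ≤ H := fun _ ↦ measureReal_nonneg
  have hle_of_mono := mul_le_mul_of_monotoneOn_div_add_of_tendsto hG0 hH0 hG hH
  have hle_of_anti := fun h ↦ mul_le_mul_of_monotoneOn_div_add_of_tendsto hH0 hG0 hH hG
    (monotoneOn_div_add_swap_of_antitoneOn h)
  refine ⟨fun hmono t ↦ ?_, fun hanti t ↦ ?_, fun hconst t ↦ ?_⟩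
  · rw [hFl, hFr, div_le_div_iff₀ hPlpos hPrpos]
    linarith [hle_of_mono hmono t]
  · rw [hFl, hFr, div_le_div_iff₀ hPrpos hPlpos]
    linarith [hle_of_anti hanti t]
  · rw [hFl, hFr, div_eq_div_iff hPlpos.ne' hPrpos.ne']
    linarith [hle_of_mono (fun s hs u hu _ ↦ (hconst s hs u hu).le) t,
      hle_of_anti (fun s hs u hu _ ↦ (hconst s hs u hu).ge) t]
end

section
/- Let k : [0, ∞) × (0, ∞) × (0, ∞) × (0, ∞) → ℝ (arguments (t, c, σ₀, α)) satisfy, for all t ≥ 0 and all c, σ₀, α, λ > 0: (1) k(t, c, σ₀, α) = k(0, c, σ_t, α), where σ_t := (σ₀⁻² + α⁻²t)^(−1/2); (2) k(0, c, λσ₀, α) = λ·k(0, cλ⁻³, σ₀, α); (3) k(t, c, σ₀, λα) = λ·k(t, λ⁻¹c, λ⁻¹σ₀, α); (4) k(0, λc, σ₀, α) = λ⁻¹·k(0, c, σ₀, α). Then, with κ := k(0, 1, 1, 1), for all t ≥ 0 and c, σ₀, α > 0: k(t, c, σ₀, α) = κ / (c·α²·(σ₀⁻² + α⁻²t)²),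 and consequently the associated signal-space boundary b(t, c, σ₀, α) := k(t, c, σ₀, α)·σ_t⁻² equals κ / (c·α²·(σ₀⁻² + α⁻²t)). -/
/-- The posterior standard deviation at time `t`:
`σ_t = (σ₀⁻² + α⁻² t)^(−1/2)`. -/
noncomputable def postSD (σ₀ α t : ℝ) : ℝ :=
  (Real.sqrt ((σ₀ ^ 2)⁻¹ + (α ^ 2)⁻¹ * t))⁻¹

/-!
Relations (2) and (4) pin down `k(0, c, σ₀, 1) = κ σ₀⁴ / c`: first move `σ₀` to `1`, then
`c` to `1`. Relation (3) at `λ = α` then reduces a general `α` to `α = 1`, and relation (1)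
reduces a general `t` to `t = 0` at the prior `σ_t`, for which `σ_t⁴ = (σ₀⁻² + α⁻²t)⁻²`.
-/

section postSD

variable {σ₀ α t : ℝ}

lemma postSD_pos (h : 0 < (σ₀ ^ 2)⁻¹ + (α ^ 2)⁻¹ * t) : 0 < postSD σ₀ α t :=
  inv_pos.mpr (Real.sqrt_pos.mpr h)

lemma postSD_sq (h : 0 ≤ (σ₀ ^ 2)⁻¹ + (α ^ 2)⁻¹ * t) :
    postSD σ₀ α t ^ 2 = ((σ₀ ^ 2)⁻¹ + (α ^ 2)⁻¹ * t)⁻¹ := by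
  rw [postSD, inv_pow, Real.sq_sqrt h]

end postSD

section Scaling

variable {k : ℝ → ℝ → ℝ → ℝ → ℝ}

lemma initial_boundary_of_unit_noise
    (h2 : ∀ c σ₀ α lam : ℝ, 0 < c → 0 < σ₀ → 0 < α → 0 < lam →
      k 0 c (lam * σ₀) α = lam * k 0 (c * lam⁻¹ ^ 3) σ₀ α)
    (h4 : ∀ c σ₀ α lam : ℝ, 0 < c → 0 < σ₀ → 0 < α → 0 < lam →
      k 0 (lam * c) σ₀ α = lam⁻¹ * k 0 c σ₀ α)
    {c σ₀ : ℝ} (hc : 0 < c) (hσ₀ : 0 < σ₀) :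
    k 0 c σ₀ 1 = k 0 1 1 1 * σ₀ ^ 4 / c := by
  have hprior : k 0 c σ₀ 1 = σ₀ * k 0 (c * σ₀⁻¹ ^ 3) 1 1 := by
    simpa only [mul_one] using h2 c 1 1 σ₀ hc one_pos one_pos hσ₀
  have hcost : k 0 (c * σ₀⁻¹ ^ 3) 1 1 = (c * σ₀⁻¹ ^ 3)⁻¹ * k 0 1 1 1 := by
    simpa only [mul_one] using h4 1 1 1 (c * σ₀⁻¹ ^ 3) one_pos one_pos one_pos (by positivity)
  rw [hprior, hcost]
  field_simp

lemma initial_boundary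
    (h2 : ∀ c σ₀ α lam : ℝ, 0 < c → 0 < σ₀ → 0 < α → 0 < lam →
      k 0 c (lam * σ₀) α = lam * k 0 (c * lam⁻¹ ^ 3) σ₀ α)
    (h3 : ∀ c σ₀ α lam : ℝ, 0 < c → 0 < σ₀ → 0 < α → 0 < lam →
      k 0 c σ₀ (lam * α) = lam * k 0 (lam⁻¹ * c) (lam⁻¹ * σ₀) α)
    (h4 : ∀ c σ₀ α lam : ℝ, 0 < c → 0 < σ₀ → 0 < α → 0 < lam →
      k 0 (lam * c) σ₀ α = lam⁻¹ * k 0 c σ₀ α)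
    {c σ₀ α : ℝ} (hc : 0 < c) (hσ₀ : 0 < σ₀) (hα : 0 < α) :
    k 0 c σ₀ α = k 0 1 1 1 * σ₀ ^ 4 / (c * α ^ 2) := by
  have hnoise : k 0 c σ₀ α = α * k 0 (α⁻¹ * c) (α⁻¹ * σ₀) 1 := by
    simpa only [mul_one] using h3 c σ₀ 1 α hc hσ₀ one_pos hα
  rw [hnoise, initial_boundary_of_unit_noise h2 h4 (by positivity) (by positivity)]
  field_simp

end Scaling

/-- If `k(t, c, σ₀, α)` satisfies the four scaling relations
(1) `k(t, c, σ₀, α) = k(0, c, σ_t, α)` with `σ_t = (σ₀⁻² + α⁻²t)^(−1/2)`,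
(2) `k(0, c, λσ₀, α) = λ k(0, cλ⁻³, σ₀, α)`,
(3) `k(t, c, σ₀, λα) = λ k(t, λ⁻¹c, λ⁻¹σ₀, α)`,
(4) `k(0, λc, σ₀, α) = λ⁻¹ k(0, c, σ₀, α)`,
then with `κ = k(0,1,1,1)` we have `k(t, c, σ₀, α) = κ / (c α² (σ₀⁻² + α⁻²t)²)`,
and the signal-space boundary `b = k·σ_t⁻²` equals `κ / (c α² (σ₀⁻² + α⁻²t))`. -/
theorem stmt_5 (k : ℝ → ℝ → ℝ → ℝ → ℝ)
    (h1 : ∀ t c σ₀ α : ℝ, 0 ≤ t → 0 < c → 0 < σ₀ → 0 < α →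
      k t c σ₀ α = k 0 c (postSD σ₀ α t) α)
    (h2 : ∀ c σ₀ α lam : ℝ, 0 < c → 0 < σ₀ → 0 < α → 0 < lam →
      k 0 c (lam * σ₀) α = lam * k 0 (c * lam⁻¹ ^ 3) σ₀ α)
    (h3 : ∀ t c σ₀ α lam : ℝ, 0 ≤ t → 0 < c → 0 < σ₀ → 0 < α → 0 < lam →
      k t c σ₀ (lam * α) = lam * k t (lam⁻¹ * c) (lam⁻¹ * σ₀) α)
    (h4 : ∀ c σ₀ α lam : ℝ, 0 < c → 0 < σ₀ → 0 < α → 0 < lam →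
      k 0 (lam * c) σ₀ α = lam⁻¹ * k 0 c σ₀ α) :
    ∀ t c σ₀ α : ℝ, 0 ≤ t → 0 < c → 0 < σ₀ → 0 < α →
      k t c σ₀ α = k 0 1 1 1 / (c * α ^ 2 * ((σ₀ ^ 2)⁻¹ + (α ^ 2)⁻¹ * t) ^ 2) ∧
      k t c σ₀ α * ((postSD σ₀ α t) ^ 2)⁻¹ =
        k 0 1 1 1 / (c * α ^ 2 * ((σ₀ ^ 2)⁻¹ + (α ^ 2)⁻¹ * t)) := by
  intro t c σ₀ α ht hc hσ₀ hα
  have hprec : 0 < (σ₀ ^ 2)⁻¹ + (α ^ 2)⁻¹ * t := by positivity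
  have hk : k t c σ₀ α = k 0 1 1 1 * (postSD σ₀ α t ^ 2) ^ 2 / (c * α ^ 2) := by
    rw [h1 t c σ₀ α ht hc hσ₀ hα,
      initial_boundary h2 (h3 0 · · · · le_rfl) h4 hc (postSD_pos hprec) hα, ← pow_mul]
  rw [hk, postSD_sq hprec.le]
  constructor <;> field_simp
end

section
/- Let (Ω, ℱ, ℙ) be a probability space, let θ^l and θ^r be integrable real-valued random variables, let 𝒢 ⊆ ℱ be a sub-σ-algebra, and set X^i = E[θ^i | 𝒢] for i ∈ {l, r}. Then E[ 1_{X^l ≥ X^r}·X^l + 1_{X^r > X^l}·X^r ] − E[ max(θ^l, θ^r) ] = E[ −1_{X^l ≥ X^r}·(θ^r − θ^l)⁺ − 1_{X^r > X^l}·(θ^l − θ^r)⁺ ], where x⁺ = max(x, 0). In particular, the objective 'expected posterior maximum' and the Chernoff ex post regret objective 'minus the expected forgone utility of the unchosen action' differ by the constant E[max(θ^l, θ^r)], which does not depend on 𝒢. -/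
/-!
On the `𝒢`-measurable event `A = {Xʳ ≤ Xˡ}` where `l` is chosen, the tower property gives
`∫_A Xˡ = ∫_A θˡ`, and likewise `∫_{Aᶜ} Xʳ = ∫_{Aᶜ} θʳ`. Hence the expected posterior mean of the
chosen action equals the expected utility of the chosen action, and subtracting `E[max(θˡ, θʳ)]`
leaves the expected forgone utility `max(θˡ, θʳ) − θ^{chosen}`, pointwise the regret in the claim.
-/

open MeasureTheory

section

variable {Ω E : Type*} [NormedAddCommGroup E] [NormedSpace ℝ E] [CompleteSpace E]
  {m m₀ : MeasurableSpace Ω} {μ : Measure Ω} {f g : Ω → E} {s : Set Ω} [DecidablePred (· ∈ s)]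

theorem integral_piecewise_condExp (hm : m ≤ m₀) [SigmaFinite (μ.trim hm)]
    (hf : Integrable f μ) (hg : Integrable g μ) (hs : MeasurableSet[m] s) :
    ∫ ω, s.piecewise (μ[f|m]) (μ[g|m]) ω ∂μ = ∫ ω, s.piecewise f g ω ∂μ := by
  rw [integral_piecewise (hm s hs) integrable_condExp.integrableOn integrable_condExp.integrableOn,
    integral_piecewise (hm s hs) hf.integrableOn hg.integrableOn,
    setIntegral_condExp hm hf hs, setIntegral_condExp hm hg hs.compl]

end

section

variable {α β : Type*} [LinearOrder α]

theorem ite_le_add_ite_lt [AddZeroClass β] (x y : α) (a b : β) :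
    ((if y ≤ x then a else 0) + if x < y then b else 0) = if y ≤ x then a else b := by
  rcases le_or_gt y x with h | h
  · simp [h, h.not_gt]
  · simp [h, h.not_ge]

theorem ite_sub_max_eq_neg_regret [AddCommGroup β] [LinearOrder β] [IsOrderedAddMonoid β]
    (x y : α) (a b : β) :
    (if y ≤ x then a else b) - max a b
      = -(if y ≤ x then max (b - a) 0 else 0) - (if x < y then max (a - b) 0 else 0) := by
  rcases le_or_gt y x with h | h
  · simp only [if_pos h, if_neg h.not_gt]
    rcases le_total a b with hab | hab <;> simp [hab]
  · simp only [if_neg h.not_ge, if_pos h]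
    rcases le_total a b with hab | hab <;> simp [hab]

end

/-- For integrable `θˡ, θʳ` on a probability space, a sub-σ-algebra
`𝒢`, and posterior means `Xⁱ = E[θⁱ | 𝒢]`, the expected posterior maximum minus
`E[max(θˡ, θʳ)]` equals the Chernoff ex-post-regret objective
`E[−1_{Xˡ ≥ Xʳ}(θʳ − θˡ)⁺ − 1_{Xʳ > Xˡ}(θˡ − θʳ)⁺]`; the two objectives differ
by the constant `E[max(θˡ, θʳ)]`, which does not depend on `𝒢`. -/
theorem stmt_6 {Ω : Type*} {m : MeasurableSpace Ω} (μ : Measure Ω)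
    [IsProbabilityMeasure μ]
    (θl θr : Ω → ℝ) (hθl : Integrable θl μ) (hθr : Integrable θr μ)
    (G : MeasurableSpace Ω) (hG : G ≤ m)
    (Xl Xr : Ω → ℝ) (hXl : Xl = μ[θl|G]) (hXr : Xr = μ[θr|G]) :
    (∫ ω, ((if Xr ω ≤ Xl ω then Xl ω else 0) +
            (if Xl ω < Xr ω then Xr ω else 0)) ∂μ)
      - ∫ ω, max (θl ω) (θr ω) ∂μ
    = ∫ ω, (-(if Xr ω ≤ Xl ω then max (θr ω - θl ω) 0 else 0)
            - (if Xl ω < Xr ω then max (θl ω - θr ω) 0 else 0)) ∂μ := by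
  subst hXl hXr
  set A := {ω | μ[θr|G] ω ≤ μ[θl|G] ω}
  have hA : MeasurableSet[G] A :=
    measurableSet_le stronglyMeasurable_condExp.measurable
      stronglyMeasurable_condExp.measurable
  have hchoice : Integrable (A.piecewise θl θr) μ :=
    Integrable.piecewise (hG A hA) hθl.integrableOn hθr.integrableOn
  calc _ = (∫ ω, A.piecewise (μ[θl|G]) (μ[θr|G]) ω ∂μ) - ∫ ω, max (θl ω) (θr ω) ∂μ := by
        congr 1
        exact integral_congr_ae (ae_of_all _ fun ω => ite_le_add_ite_lt _ _ _ _)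
    _ = (∫ ω, A.piecewise θl θr ω ∂μ) - ∫ ω, max (θl ω) (θr ω) ∂μ := by
        rw [integral_piecewise_condExp hG hθl hθr hA]
    _ = ∫ ω, (A.piecewise θl θr ω - max (θl ω) (θr ω)) ∂μ :=
        (integral_sub hchoice (hθl.sup hθr)).symm
    _ = _ := integral_congr_ae <| ae_of_all _ fun ω =>
        ite_sub_max_eq_neg_regret (μ[θl|G] ω) (μ[θr|G] ω) (θl ω) (θr ω)
end

section
/- Let k : [0, ∞) × (0, ∞) × (0, ∞) × (0, ∞) → [0, ∞) (arguments (t, c, σ₀, α)) satisfy, for all t ≥ 0 and all c, σ₀, α > 0: (1) k(t, c, σ₀, α) = k(0, c, σ_t, α) with σ_t := (σ₀⁻² + α⁻²t)^(−1/2); (2) k(0, c, λσ₀, α) = λ·k(0, cλ⁻³, σ₀, α) for all λ > 0; (3) k(0, λc, σ₀, α) ≥ λ⁻¹·k(0, c, σ₀, α) for all λ ≥ 1; and suppose t ↦ k(t, c, σ₀, α) is nonincreasing. Then for all t, ε ≥ 0: 0 ≥ k(t + ε, c, σ₀, α) − k(t, c, σ₀, α) ≥ [ (1 + ε·α⁻²·σ_t²)⁻²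 − 1 ]·k(t, c, σ₀, α) ≥ −2ε·α⁻²·σ₀²·k(0, c, σ₀, α). In particular, for fixed (c, σ₀, α), the function t ↦ k(t, c, σ₀, α) is Lipschitz continuous with Lipschitz constant 2α⁻²σ₀²·k(0, c, σ₀, α). -/
/-!
Between times `t` and `t + ε` the posterior variance shrinks by the factor `(1 + x)⁻¹` with
`x = ε α⁻² σ_t²`, so by the time-shift relation (1) the boundary at `t + ε` is the time-`0`
boundary with prior standard deviation `λ σ_t`, `λ = (1 + x)^(-1/2) ≤ 1`. The scaling relation (2)
trades the factor `λ` on `σ` for a factor `λ` outside and a cost multiplied by `λ⁻³ ≥ 1`, which by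
(3) costs at most a further factor `λ³`; hence `k(t + ε) ≥ λ⁴ k(t) = (1 + x)⁻² k(t)`. The
elementary bound `1 - (1 + x)⁻² ≤ 2x`, together with `σ_t ≤ σ₀` and `0 ≤ k(t) ≤ k(0)`, gives the
linear lower bound, and monotonicity gives the upper one.
-/

open Set

/-- The posterior variance at time `t`: `σ_t² = (σ₀⁻² + α⁻² t)⁻¹`. -/
noncomputable def postVar (σ₀ α t : ℝ) : ℝ :=
  ((σ₀ ^ 2)⁻¹ + (α ^ 2)⁻¹ * t)⁻¹

section PostVar

variable {σ₀ α t : ℝ}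

lemma postVar_pos (hσ : 0 < σ₀) (ht : 0 ≤ t) : 0 < postVar σ₀ α t := by
  unfold postVar
  positivity

lemma postVar_le_sq (hσ : 0 < σ₀) (ht : 0 ≤ t) : postVar σ₀ α t ≤ σ₀ ^ 2 := by
  have hαt : 0 ≤ (α ^ 2)⁻¹ * t := by positivity
  have := inv_anti₀ (by positivity : 0 < (σ₀ ^ 2)⁻¹) (le_add_of_nonneg_right hαt)
  rwa [inv_inv] at this

lemma postVar_add (hσ : 0 < σ₀) (ht : 0 ≤ t) (ε : ℝ) :
    postVar σ₀ α (t + ε) = (1 + ε * (α ^ 2)⁻¹ * postVar σ₀ α t)⁻¹ * postVar σ₀ α t := by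
  have hA : (σ₀ ^ 2)⁻¹ + (α ^ 2)⁻¹ * t ≠ 0 := by positivity
  simp only [postVar]
  field_simp
  ring

end PostVar

lemma one_sub_inv_one_add_sq_le {x : ℝ} (hx : 0 ≤ x) : 1 - (1 + x)⁻¹ ^ 2 ≤ 2 * x := by
  have hy : (1 + x)⁻¹ * (1 + x) = 1 := inv_mul_cancel₀ (by positivity)
  have hy0 : 0 ≤ (1 + x)⁻¹ := by positivity
  have hy1 : (1 + x)⁻¹ ≤ 1 := inv_le_one_of_one_le₀ (by linarith)
  have hfactor : 1 - (1 + x)⁻¹ ^ 2 = x * ((1 + x)⁻¹ * (1 + (1 + x)⁻¹)) := by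
    linear_combination (-(1 + x)⁻¹ - 1) * hy
  rw [hfactor]
  nlinarith [mul_nonneg hx hy0]

lemma pow_four_mul_le_of_scaling (K : ℝ → ℝ → ℝ)
    (hscale : ∀ c σ lam : ℝ, 0 < c → 0 < σ → 0 < lam → K c (lam * σ) = lam * K (c * lam⁻¹ ^ 3) σ)
    (hcost : ∀ c σ lam : ℝ, 0 < c → 0 < σ → 1 ≤ lam → lam⁻¹ * K c σ ≤ K (lam * c) σ)
    {c σ lam : ℝ} (hc : 0 < c) (hσ : 0 < σ) (hlam : 0 < lam) (hlam1 : lam ≤ 1) :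
    lam ^ 4 * K c σ ≤ K c (lam * σ) := by
  have hcost' : lam ^ 3 * K c σ ≤ K (c * lam⁻¹ ^ 3) σ := by
    have := hcost c σ (lam⁻¹ ^ 3) hc hσ (one_le_pow₀ ((one_le_inv₀ hlam).2 hlam1))
    rwa [inv_pow, inv_inv, mul_comm _ c, ← inv_pow] at this
  calc lam ^ 4 * K c σ = lam * (lam ^ 3 * K c σ) := by ring
    _ ≤ lam * K (c * lam⁻¹ ^ 3) σ := mul_le_mul_of_nonneg_left hcost' hlam.le
    _ = K c (lam * σ) := (hscale c σ lam hc hσ hlam).symm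

lemma inv_one_add_sq_mul_le_add (k : ℝ → ℝ → ℝ → ℝ → ℝ)
    (h1 : ∀ t c σ₀ α : ℝ, 0 ≤ t → 0 < c → 0 < σ₀ → 0 < α →
      k t c σ₀ α = k 0 c (Real.sqrt (postVar σ₀ α t)) α)
    (h2 : ∀ c σ₀ α lam : ℝ, 0 < c → 0 < σ₀ → 0 < α → 0 < lam →
      k 0 c (lam * σ₀) α = lam * k 0 (c * lam⁻¹ ^ 3) σ₀ α)
    (h3 : ∀ c σ₀ α lam : ℝ, 0 < c → 0 < σ₀ → 0 < α → 1 ≤ lam →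
      lam⁻¹ * k 0 c σ₀ α ≤ k 0 (lam * c) σ₀ α)
    {c σ₀ α t ε : ℝ} (hc : 0 < c) (hσ : 0 < σ₀) (hα : 0 < α) (ht : 0 ≤ t) (hε : 0 ≤ ε) :
    (1 + ε * (α ^ 2)⁻¹ * postVar σ₀ α t)⁻¹ ^ 2 * k t c σ₀ α ≤ k (t + ε) c σ₀ α := by
  set y := (1 + ε * (α ^ 2)⁻¹ * postVar σ₀ α t)⁻¹
  have hV := postVar_pos (α := α) hσ ht
  have hy : 0 < y := by positivity
  have hy1 : y ≤ 1 := inv_le_one_of_one_le₀ (le_add_of_nonneg_right (by positivity))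
  have hσt : 0 < Real.sqrt (postVar σ₀ α t) := Real.sqrt_pos.2 hV
  have hshift : Real.sqrt (postVar σ₀ α (t + ε)) = Real.sqrt y * Real.sqrt (postVar σ₀ α t) := by
    rw [postVar_add hσ ht, Real.sqrt_mul hy.le]
  have hy2 : y ^ 2 = Real.sqrt y ^ 4 := by
    rw [show (4 : ℕ) = 2 * 2 from rfl, pow_mul, Real.sq_sqrt hy.le]
  rw [h1 t c σ₀ α ht hc hσ hα, h1 (t + ε) c σ₀ α (by linarith) hc hσ hα, hshift, hy2]
  exact pow_four_mul_le_of_scaling (fun c σ => k 0 c σ α)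
    (fun c σ lam hc hσ hlam => h2 c σ α lam hc hσ hα hlam)
    (fun c σ lam hc hσ hlam => h3 c σ α lam hc hσ hα hlam)
    hc hσt (Real.sqrt_pos.2 hy) (Real.sqrt_le_one.2 hy1)

lemma abs_sub_le_of_antitoneOn {f : ℝ → ℝ} {s : Set ℝ} (hf : AntitoneOn f s) {L : ℝ}
    (hL : ∀ a ∈ s, ∀ b ∈ s, a ≤ b → f a - f b ≤ L * (b - a)) {a b : ℝ} (ha : a ∈ s) (hb : b ∈ s) :
    |f a - f b| ≤ L * |a - b| := by
  wlog hab : a ≤ b generalizing a b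
  · rw [abs_sub_comm, abs_sub_comm a]
    exact this hb ha (le_of_not_ge hab)
  rw [abs_of_nonneg (sub_nonneg.2 (hf ha hb hab)), abs_of_nonpos (sub_nonpos.2 hab), neg_sub]
  exact hL a ha b hb hab

lemma increment_bounds (k : ℝ → ℝ → ℝ → ℝ → ℝ)
    (h1 : ∀ t c σ₀ α : ℝ, 0 ≤ t → 0 < c → 0 < σ₀ → 0 < α →
      k t c σ₀ α = k 0 c (Real.sqrt (postVar σ₀ α t)) α)
    (h2 : ∀ c σ₀ α lam : ℝ, 0 < c → 0 < σ₀ → 0 < α → 0 < lam →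
      k 0 c (lam * σ₀) α = lam * k 0 (c * lam⁻¹ ^ 3) σ₀ α)
    (h3 : ∀ c σ₀ α lam : ℝ, 0 < c → 0 < σ₀ → 0 < α → 1 ≤ lam →
      lam⁻¹ * k 0 c σ₀ α ≤ k 0 (lam * c) σ₀ α)
    {c σ₀ α : ℝ} (hc : 0 < c) (hσ : 0 < σ₀) (hα : 0 < α)
    (hknn : ∀ t, 0 ≤ t → 0 ≤ k t c σ₀ α) (hanti : AntitoneOn (fun t => k t c σ₀ α) (Ici 0))
    {t ε : ℝ} (ht : 0 ≤ t) (hε : 0 ≤ ε) :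
    k (t + ε) c σ₀ α - k t c σ₀ α ≤ 0 ∧
      ((1 + ε * (α ^ 2)⁻¹ * postVar σ₀ α t)⁻¹ ^ 2 - 1) * k t c σ₀ α ≤
        k (t + ε) c σ₀ α - k t c σ₀ α ∧
      -(2 * ε * (α ^ 2)⁻¹ * σ₀ ^ 2 * k 0 c σ₀ α) ≤
        ((1 + ε * (α ^ 2)⁻¹ * postVar σ₀ α t)⁻¹ ^ 2 - 1) * k t c σ₀ α := by
  have hgrowth := inv_one_add_sq_mul_le_add k h1 h2 h3 hc hσ hα ht hε
  have hkt := hknn t ht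
  have hkt0 : k t c σ₀ α ≤ k 0 c σ₀ α := hanti self_mem_Ici ht ht
  have hx : 0 ≤ ε * (α ^ 2)⁻¹ * postVar σ₀ α t := by
    have := postVar_pos (α := α) hσ ht
    positivity
  have hdecay := mul_le_mul_of_nonneg_right (one_sub_inv_one_add_sq_le hx) hkt
  have hVk : postVar σ₀ α t * k t c σ₀ α ≤ σ₀ ^ 2 * k 0 c σ₀ α :=
    mul_le_mul (postVar_le_sq hσ ht) hkt0 hkt (sq_nonneg σ₀)
  have hεα : 0 ≤ 2 * ε * (α ^ 2)⁻¹ := by positivity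
  refine ⟨sub_nonpos.2 (hanti ht (mem_Ici.2 (by linarith)) (by linarith)), by linarith, ?_⟩
  nlinarith [mul_le_mul_of_nonneg_left hVk hεα]

/-- If `k(t, c, σ₀, α) ≥ 0` satisfies
(1) `k(t, c, σ₀, α) = k(0, c, σ_t, α)` with `σ_t = (σ₀⁻² + α⁻²t)^(−1/2)`,
(2) `k(0, c, λσ₀, α) = λ k(0, cλ⁻³, σ₀, α)` for `λ > 0`,
(3) `k(0, λc, σ₀, α) ≥ λ⁻¹ k(0, c, σ₀, α)` for `λ ≥ 1`,
and `t ↦ k(t, c, σ₀, α)` is nonincreasing, then for all `t, ε ≥ 0`,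
`0 ≥ k(t+ε) − k(t) ≥ ((1 + ε α⁻² σ_t²)⁻² − 1)·k(t) ≥ −2ε α⁻² σ₀²·k(0)`;
in particular `t ↦ k(t, c, σ₀, α)` is Lipschitz with constant
`2 α⁻² σ₀² k(0, c, σ₀, α)`. -/
theorem stmt_7 (k : ℝ → ℝ → ℝ → ℝ → ℝ)
    (hknn : ∀ t c σ₀ α : ℝ, 0 ≤ t → 0 < c → 0 < σ₀ → 0 < α → 0 ≤ k t c σ₀ α)
    (h1 : ∀ t c σ₀ α : ℝ, 0 ≤ t → 0 < c → 0 < σ₀ → 0 < α →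
      k t c σ₀ α = k 0 c (Real.sqrt (postVar σ₀ α t)) α)
    (h2 : ∀ c σ₀ α lam : ℝ, 0 < c → 0 < σ₀ → 0 < α → 0 < lam →
      k 0 c (lam * σ₀) α = lam * k 0 (c * lam⁻¹ ^ 3) σ₀ α)
    (h3 : ∀ c σ₀ α lam : ℝ, 0 < c → 0 < σ₀ → 0 < α → 1 ≤ lam →
      lam⁻¹ * k 0 c σ₀ α ≤ k 0 (lam * c) σ₀ α)
    (hmono : ∀ c σ₀ α : ℝ, 0 < c → 0 < σ₀ → 0 < α →
      AntitoneOn (fun t => k t c σ₀ α) (Set.Ici 0)) :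
    ∀ c σ₀ α : ℝ, 0 < c → 0 < σ₀ → 0 < α →
      (∀ t ε : ℝ, 0 ≤ t → 0 ≤ ε →
        (k (t + ε) c σ₀ α - k t c σ₀ α ≤ 0 ∧
         ((1 + ε * (α ^ 2)⁻¹ * postVar σ₀ α t)⁻¹ ^ 2 - 1) * k t c σ₀ α ≤
           k (t + ε) c σ₀ α - k t c σ₀ α ∧
         -(2 * ε * (α ^ 2)⁻¹ * σ₀ ^ 2 * k 0 c σ₀ α) ≤
           ((1 + ε * (α ^ 2)⁻¹ * postVar σ₀ α t)⁻¹ ^ 2 - 1) * k t c σ₀ α)) ∧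
      (∀ t s : ℝ, 0 ≤ t → 0 ≤ s →
        |k t c σ₀ α - k s c σ₀ α| ≤
          2 * (α ^ 2)⁻¹ * σ₀ ^ 2 * k 0 c σ₀ α * |t - s|) := by
  intro c σ₀ α hc hσ hα
  have hanti := hmono c σ₀ α hc hσ hα
  have step := fun t ε (ht : 0 ≤ t) (hε : 0 ≤ ε) =>
    increment_bounds k h1 h2 h3 hc hσ hα (fun t ht => hknn t c σ₀ α ht hc hσ hα) hanti ht hε
  refine ⟨step, fun t s ht hs => abs_sub_le_of_antitoneOn hanti ?_ ht hs⟩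
  intro a ha b _ hab
  obtain ⟨-, hlower, hlinear⟩ := step a (b - a) ha (sub_nonneg.2 hab)
  rw [add_sub_cancel] at hlower
  linarith
end

section
/- Let k : (0, ∞) × (0, ∞) → ℝ (arguments (c, σ)) be differentiable, satisfy k(c, λσ) = λ·k(cλ⁻³, σ) for all c, σ, λ > 0, and suppose ∂k/∂c ≤ 0 everywhere. Then for each fixed c > 0 the map σ ↦ k(c, σ)/σ is nondecreasing on (0, ∞); consequently, for any σ₀, α > 0, the map t ↦ k(c, σ_t)/σ_t with σ_t := (σ₀⁻² + α⁻²t)^(−1/2) is nonincreasing in t on [0, ∞). -/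
/-!
Rescaling `σ₂ = λ σ₁` with `λ ≥ 1` gives `k(c, σ₂)/σ₂ = k(cλ⁻³, σ₁)/σ₁`, and `cλ⁻³ ≤ c` together
with `∂k/∂c ≤ 0` makes this at least `k(c, σ₁)/σ₁`. The posterior standard deviation `σ_t`
decreases in `t`, so `t ↦ k(c, σ_t)/σ_t` is nonincreasing.
-/

open Set

theorem antitoneOn_Ioi_of_hasDerivAt_nonpos {f f' : ℝ → ℝ}
    (hf : ∀ x, 0 < x → HasDerivAt f (f' x) x) (hf' : ∀ x, 0 < x → f' x ≤ 0) :
    AntitoneOn f (Ioi 0) :=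
  antitoneOn_of_hasDerivWithinAt_nonpos (convex_Ioi 0)
    (fun x hx => (hf x hx).continuousAt.continuousWithinAt)
    (fun x hx => (hf x (interior_Ioi.subset hx)).hasDerivWithinAt)
    (fun x hx => hf' x (interior_Ioi.subset hx))

theorem monotoneOn_div_self_of_scaling {k : ℝ → ℝ → ℝ} {c : ℝ} (n : ℕ) (hc : 0 < c)
    (hscale : ∀ σ lam : ℝ, 0 < σ → 0 < lam → k c (lam * σ) = lam * k (c * lam⁻¹ ^ n) σ)
    (hanti : ∀ σ : ℝ, 0 < σ → AntitoneOn (fun c' => k c' σ) (Ioi 0)) :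
    MonotoneOn (fun σ => k c σ / σ) (Ioi 0) := by
  intro σ₁ (h₁ : 0 < σ₁) σ₂ (h₂ : 0 < σ₂) h₁₂
  set lam := σ₂ / σ₁
  have hlam : 1 ≤ lam := (one_le_div h₁).2 h₁₂
  have hσ₂ : σ₂ = lam * σ₁ := (div_mul_cancel₀ σ₂ h₁.ne').symm
  have hc_le : c * lam⁻¹ ^ n ≤ c :=
    mul_le_of_le_one_right hc.le (pow_le_one₀ (by positivity) (inv_le_one_of_one_le₀ hlam))
  have hk : k c σ₁ ≤ k (c * lam⁻¹ ^ n) σ₁ :=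
    hanti σ₁ h₁ (show 0 < c * lam⁻¹ ^ n by positivity) hc hc_le
  calc k c σ₁ / σ₁ ≤ k (c * lam⁻¹ ^ n) σ₁ / σ₁ := div_le_div_of_nonneg_right hk h₁.le
    _ = k c σ₂ / σ₂ := by
      rw [hσ₂, hscale σ₁ lam h₁ (by positivity), mul_div_mul_left _ _ (by positivity)]

theorem antitoneOn_inv_sqrt_affine {a b : ℝ} (ha : 0 < a) (hb : 0 ≤ b) :
    AntitoneOn (fun t => (Real.sqrt (a + b * t))⁻¹) (Ici 0) := by
  intro s (hs : 0 ≤ s) t (_ : 0 ≤ t) hst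
  have hs_pos : 0 < Real.sqrt (a + b * s) := Real.sqrt_pos.2 (by positivity)
  exact inv_anti₀ hs_pos (Real.sqrt_le_sqrt (by gcongr))

theorem stmt_9_general (k kc : ℝ → ℝ → ℝ)
    (hdc : ∀ c σ : ℝ, 0 < c → 0 < σ → HasDerivAt (fun c' => k c' σ) (kc c σ) c)
    (hscale : ∀ c σ lam : ℝ, 0 < c → 0 < σ → 0 < lam →
      k c (lam * σ) = lam * k (c * lam⁻¹ ^ 3) σ)
    (hkc : ∀ c σ : ℝ, 0 < c → 0 < σ → kc c σ ≤ 0) :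
    ∀ c : ℝ, 0 < c →
      MonotoneOn (fun σ => k c σ / σ) (Set.Ioi 0) ∧
      (∀ σ₀ α : ℝ, 0 < σ₀ → 0 < α →
        AntitoneOn
          (fun t => k c ((Real.sqrt ((σ₀ ^ 2)⁻¹ + (α ^ 2)⁻¹ * t))⁻¹) /
            ((Real.sqrt ((σ₀ ^ 2)⁻¹ + (α ^ 2)⁻¹ * t))⁻¹))
          (Set.Ici 0)) := by
  intro c hc
  have hanti : ∀ σ : ℝ, 0 < σ → AntitoneOn (fun c' => k c' σ) (Ioi 0) := fun σ hσ =>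
    antitoneOn_Ioi_of_hasDerivAt_nonpos (fun c' hc' => hdc c' σ hc' hσ)
      (fun c' hc' => hkc c' σ hc' hσ)
  have hmono := monotoneOn_div_self_of_scaling 3 hc (hscale c · · hc) hanti
  refine ⟨hmono, fun σ₀ α hσ₀ hα => ?_⟩
  refine hmono.comp_AntitoneOn (antitoneOn_inv_sqrt_affine (by positivity) (by positivity)) ?_
  intro t (ht : 0 ≤ t)
  exact inv_pos.2 (Real.sqrt_pos.2 (by positivity))

/-- If `k(c, σ)` is differentiable on `(0,∞)²` (with partial
derivatives `kc, kσ`), satisfies `k(c, λσ) = λ·k(cλ⁻³, σ)` for all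
`c, σ, λ > 0`, and `∂k/∂c ≤ 0` everywhere on `(0,∞)²`, then for each fixed
`c > 0` the map `σ ↦ k(c, σ)/σ` is nondecreasing on `(0, ∞)`; consequently, for
any `σ₀, α > 0`, the map `t ↦ k(c, σ_t)/σ_t` with
`σ_t = (σ₀⁻² + α⁻²t)^(−1/2)` is nonincreasing on `[0, ∞)`. -/
theorem stmt_9 (k kc kσ : ℝ → ℝ → ℝ)
    (hdc : ∀ c σ : ℝ, 0 < c → 0 < σ → HasDerivAt (fun c' => k c' σ) (kc c σ) c)
    (hdσ : ∀ c σ : ℝ, 0 < c → 0 < σ → HasDerivAt (fun σ' => k c σ') (kσ c σ) σ)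
    (hscale : ∀ c σ lam : ℝ, 0 < c → 0 < σ → 0 < lam →
      k c (lam * σ) = lam * k (c * lam⁻¹ ^ 3) σ)
    (hkc : ∀ c σ : ℝ, 0 < c → 0 < σ → kc c σ ≤ 0) :
    ∀ c : ℝ, 0 < c →
      MonotoneOn (fun σ => k c σ / σ) (Set.Ioi 0) ∧
      (∀ σ₀ α : ℝ, 0 < σ₀ → 0 < α →
        AntitoneOn
          (fun t => k c ((Real.sqrt ((σ₀ ^ 2)⁻¹ + (α ^ 2)⁻¹ * t))⁻¹) /
            ((Real.sqrt ((σ₀ ^ 2)⁻¹ + (α ^ 2)⁻¹ * t))⁻¹))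
          (Set.Ici 0)) :=
  stmt_9_general k kc hdc hscale hkc
end
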